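/- arXiv:0906.0809 — 2 statements merged into one kernel-verified Lean document; each statement's English description precedes it below -/
import Mathlib

section
/- Decompose the footprint of a centered 1 × L rectangle (L > 1) over a quarter-plane corner into the intersection of the inscribed central unit square with the quarter-plane (blue part) and the remainder (red part). Then the blue part always has area 1/4 independent of orientation, and the red part has area zero if and only if the rectangle is in the symmetric 45-degree position. -/
open Real MeasureTheory

/-- The rectangle of width 1 and length `L`, centered at `c` and rotated by `θ`. -/
def rect (c : ℝ × ℝ) (θ L : ℝ) : Set (ℝ × ℝ) :=
  {p | |Real.cos θ * (p.1 - c.1) + Real.sin θ * (p.2 - c.2)| ≤ 1 / 2 ∧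
       |(-Real.sin θ) * (p.1 - c.1) + Real.cos θ * (p.2 - c.2)| ≤ L / 2}

/-- The quarter-plane modeling the table corner. -/
def Q : Set (ℝ × ℝ) := {p | p.1 ≤ 0 ∧ p.2 ≤ 0}

/-!
The map `p ↦ (cos θ p.1 + sin θ p.2, -sin θ p.1 + cos θ p.2)` is a rotation, so it preserves
area and carries the unit square onto an axis-parallel one. That square is invariant under the
quarter turn, which permutes the four closed quadrants; these overlap only on the null axes, so
each of them, in particular the corner `Q`, holds a quarter of the unit area.

In the coordinates `u, v` along the sides, the red part is the set of points of `Q` with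
`|u| ≤ 1/2 < |v| ≤ L/2`. When `cos θ = sin θ`, on `Q` one has `|v| ≤ |u|`, so it is empty.
Otherwise some direction in the open quadrant has `|u| < |v|`; a suitable multiple of it lies in
the open set of points of `Q` with `|u| < 1/2 < |v| < L/2`, which therefore has positive area.
-/

open Set

noncomputable def planeRotation (c s : ℝ) : (ℝ × ℝ) →ₗ[ℝ] ℝ × ℝ :=
  Matrix.toLin (Module.Basis.finTwoProd ℝ) (Module.Basis.finTwoProd ℝ) !![c, s; -s, c]

lemma planeRotation_apply (c s : ℝ) (p : ℝ × ℝ) :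
    planeRotation c s p = (c * p.1 + s * p.2, -s * p.1 + c * p.2) :=
  Matrix.toLin_finTwoProd_apply _ _ _ _ p

lemma det_planeRotation (c s : ℝ) : LinearMap.det (planeRotation c s) = c ^ 2 + s ^ 2 := by
  rw [planeRotation, LinearMap.det_toLin, Matrix.det_fin_two_of]
  ring

lemma measurePreserving_planeRotation {c s : ℝ} (h : c ^ 2 + s ^ 2 = 1) :
    MeasurePreserving (planeRotation c s) volume volume where
  measurable := (planeRotation c s).continuous_of_finiteDimensional.measurable
  map_eq := by
    rw [Measure.map_linearMap_addHaar_eq_smul_addHaar _ (by simp [det_planeRotation, h]),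
      det_planeRotation, h]
    simp

lemma measure_inter_union_preimage_eq_two_mul {α : Type*} [MeasurableSpace α] {μ : Measure α}
    {g : α → α} (hg : MeasurePreserving g μ μ) {S A : Set α} (hS : MeasurableSet S)
    (hA : MeasurableSet A) (hgS : g ⁻¹' S = S) (hA_null : μ (A ∩ g ⁻¹' A) = 0) :
    μ (S ∩ (A ∪ g ⁻¹' A)) = 2 * μ (S ∩ A) := by
  have h_image : μ (S ∩ g ⁻¹' A) = μ (S ∩ A) := by
    rw [← hg.measure_preimage (hS.inter hA).nullMeasurableSet, preimage_inter, hgS]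
  have h_disj : AEDisjoint μ (S ∩ A) (S ∩ g ⁻¹' A) :=
    measure_mono_null (inter_subset_inter inter_subset_right inter_subset_right) hA_null
  rw [inter_union_distrib_left,
    measure_union₀ (hS.inter (hg.measurable hA)).nullMeasurableSet h_disj, h_image, two_mul]

lemma volume_setOf_fst_eq (a : ℝ) : volume {p : ℝ × ℝ | p.1 = a} = 0 := by
  have h : {p : ℝ × ℝ | p.1 = a} = {a} ×ˢ univ := by ext; simp
  rw [h, Measure.volume_eq_prod, Measure.prod_prod, Real.volume_singleton, zero_mul]

lemma volume_setOf_snd_eq (a : ℝ) : volume {p : ℝ × ℝ | p.2 = a} = 0 := by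
  have h : {p : ℝ × ℝ | p.2 = a} = univ ×ˢ {a} := by ext; simp
  rw [h, Measure.volume_eq_prod, Measure.prod_prod, Real.volume_singleton, mul_zero]

lemma four_mul_volume_inter_Q {S : Set (ℝ × ℝ)} (hS : MeasurableSet S)
    (h_rot : planeRotation 0 1 ⁻¹' S = S) : 4 * volume (S ∩ Q) = volume S := by
  have hR := measurePreserving_planeRotation (c := 0) (s := 1) (by norm_num)
  have hQ : MeasurableSet Q :=
    (measurableSet_le measurable_fst measurable_const).inter
      (measurableSet_le measurable_snd measurable_const)
  have h_half : volume (S ∩ {p | p.2 ≤ 0}) = 2 * volume (S ∩ Q) := by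
    have h_union : Q ∪ planeRotation 0 1 ⁻¹' Q = {p | p.2 ≤ 0} := by
      ext p
      simp only [Q, mem_union, mem_preimage, mem_ofPred_eq, planeRotation_apply, zero_mul, one_mul,
        zero_add]
      constructor
      · rintro (⟨_, hy⟩ | ⟨hy, _⟩) <;> exact hy
      · intro hy
        rcases le_total p.1 0 with hx | hx
        · exact Or.inl ⟨hx, hy⟩
        · exact Or.inr ⟨by linarith, by linarith⟩
    rw [← h_union]
    refine measure_inter_union_preimage_eq_two_mul hR hS hQ h_rot
      (measure_mono_null ?_ (volume_setOf_fst_eq 0))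
    intro p ⟨⟨hx, _⟩, _, hx'⟩
    simp only [planeRotation_apply] at hx'
    exact le_antisymm hx (by linarith)
  have h_whole : volume S = 2 * volume (S ∩ {p | p.2 ≤ 0}) := by
    have h_union : {p : ℝ × ℝ | p.2 ≤ 0} ∪ (planeRotation 0 1 ∘ planeRotation 0 1) ⁻¹'
        {p | p.2 ≤ 0} = univ := by
      refine eq_univ_of_forall fun p => ?_
      simp only [mem_union, mem_preimage, mem_ofPred_eq, Function.comp, planeRotation_apply]
      rcases le_total p.2 0 with h | h
      · exact Or.inl h
      · exact Or.inr (by linarith)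
    conv_lhs => rw [← inter_univ S, ← h_union]
    refine measure_inter_union_preimage_eq_two_mul (hR.comp hR) hS
      (measurableSet_le measurable_snd measurable_const) (by rw [preimage_comp, h_rot, h_rot])
      (measure_mono_null ?_ (volume_setOf_snd_eq 0))
    intro p ⟨hy, hy'⟩
    simp only [mem_preimage, mem_ofPred_eq, Function.comp, planeRotation_apply] at hy hy'
    exact le_antisymm hy (by linarith)
  rw [h_whole, h_half, ← mul_assoc]
  norm_num

lemma mem_rect_zero {θ L : ℝ} {p : ℝ × ℝ} :
    p ∈ rect (0, 0) θ L ↔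
      |cos θ * p.1 + sin θ * p.2| ≤ 1 / 2 ∧ |-sin θ * p.1 + cos θ * p.2| ≤ L / 2 := by
  simp [rect]

lemma rect_zero_eq_preimage (θ L : ℝ) :
    rect (0, 0) θ L =
      planeRotation (cos θ) (sin θ) ⁻¹'
        (Icc (-(1 / 2)) (1 / 2) ×ˢ Icc (-(L / 2)) (L / 2)) := by
  ext p
  simp only [mem_rect_zero, mem_preimage, planeRotation_apply, mem_prod, mem_Icc, abs_le]

lemma measurableSet_rect_zero (θ L : ℝ) : MeasurableSet (rect (0, 0) θ L) := by
  rw [rect_zero_eq_preimage]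
  exact (measurePreserving_planeRotation (cos_sq_add_sin_sq θ)).measurable
    (measurableSet_Icc.prod measurableSet_Icc)

lemma volume_rect_zero (θ L : ℝ) : volume (rect (0, 0) θ L) = ENNReal.ofReal L := by
  rw [rect_zero_eq_preimage,
    (measurePreserving_planeRotation (cos_sq_add_sin_sq θ)).measure_preimage
      (measurableSet_Icc.prod measurableSet_Icc).nullMeasurableSet,
    Measure.volume_eq_prod, Measure.prod_prod, Real.volume_Icc, Real.volume_Icc]
  norm_num

lemma preimage_planeRotation_rect_one (θ : ℝ) :
    planeRotation 0 1 ⁻¹' rect (0, 0) θ 1 = rect (0, 0) θ 1 := by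
  ext p
  simp only [mem_preimage, mem_rect_zero, planeRotation_apply]
  rw [← abs_neg (-sin θ * _ + _)]
  ring_nf
  tauto

lemma volume_rect_one_inter_Q (θ : ℝ) : volume (rect (0, 0) θ 1 ∩ Q) = 1 / 4 := by
  rw [ENNReal.eq_div_iff (by norm_num) (by norm_num),
    four_mul_volume_inter_Q (measurableSet_rect_zero θ 1) (preimage_planeRotation_rect_one θ),
    volume_rect_zero, ENNReal.ofReal_one]

lemma cos_eq_sin_iff {θ : ℝ} : cos θ = sin θ ↔ ∃ k : ℤ, θ = π / 4 + k * π := by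
  have h : sin (θ - π / 4) = √2 / 2 * (sin θ - cos θ) := by
    rw [sin_sub, sin_pi_div_four, cos_pi_div_four]
    ring
  rw [eq_comm, ← sub_eq_zero, ← mul_eq_zero_iff_left (by positivity : √2 / 2 ≠ 0), ← h,
    sin_eq_zero_iff]
  exact exists_congr fun k => by constructor <;> intro hk <;> linarith

lemma rect_inter_Q_subset_rect_one {θ : ℝ} (h : cos θ = sin θ) (L : ℝ) :
    rect (0, 0) θ L ∩ Q ⊆ rect (0, 0) θ 1 := by
  rintro p ⟨hp, hx, hy⟩
  rw [mem_rect_zero] at hp ⊢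
  refine ⟨hp.1, le_trans ?_ hp.1⟩
  rw [← h, show -cos θ * p.1 + cos θ * p.2 = cos θ * (p.2 - p.1) by ring,
    show cos θ * p.1 + cos θ * p.2 = cos θ * (p.1 + p.2) by ring, abs_mul, abs_mul]
  refine mul_le_mul_of_nonneg_left ?_ (abs_nonneg _)
  rw [abs_of_nonpos (by linarith : p.1 + p.2 ≤ 0), abs_le]
  constructor <;> linarith

lemma exists_neg_neg_abs_lt {c s : ℝ} (h : c ^ 2 + s ^ 2 = 1) (hcs : c ≠ s) :
    ∃ w : ℝ × ℝ, w.1 < 0 ∧ w.2 < 0 ∧ |c * w.1 + s * w.2| < |-s * w.1 + c * w.2| := by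
  simp only [← sq_lt_sq]
  -- The difference of the squares is `(s² - c²)(x² - y²) - 4csxy`: take `x² - y²` of the sign of
  -- `s² - c²` and `xy` small, or `x = y` when `c = -s`.
  rcases lt_trichotomy (c ^ 2) (s ^ 2) with hlt | heq | hgt
  · refine ⟨(-4, -(s ^ 2 - c ^ 2)), by norm_num, by simpa using hlt, ?_⟩
    nlinarith [sq_nonneg (c + s), sq_nonneg (c - s), sq_nonneg (s ^ 2 - c ^ 2)]
  · have hc : c = -s := (sq_eq_sq_iff_eq_or_eq_neg.mp heq).resolve_left hcs
    refine ⟨(-1, -1), by norm_num, by norm_num, ?_⟩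
    subst hc
    nlinarith
  · refine ⟨(-(c ^ 2 - s ^ 2), -4), by simpa using hgt, by norm_num, ?_⟩
    nlinarith [sq_nonneg (c + s), sq_nonneg (c - s), sq_nonneg (s ^ 2 - c ^ 2)]

lemma exists_mul_lt_half_lt_mul {a b L : ℝ} (ha : 0 ≤ a) (hab : a < b) (hL : 1 < L) :
    ∃ t : ℝ, 0 < t ∧ t * a < 1 / 2 ∧ 1 / 2 < t * b ∧ t * b < L / 2 := by
  have hb : 0 < b := ha.trans_lt hab
  -- `t (a + b) < 1` together with `1/2 < t b` forces `t a < 1/2`.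
  obtain ⟨t, ht_lo, ht_hi⟩ := exists_between (lt_min
    (div_lt_div_of_pos_right hL (by positivity) : 1 / (2 * b) < L / (2 * b))
    (one_div_lt_one_div_of_lt (by positivity) (by linarith) : 1 / (2 * b) < 1 / (a + b)))
  rw [div_lt_iff₀ (by positivity)] at ht_lo
  rw [lt_min_iff, lt_div_iff₀ (by positivity), lt_div_iff₀ (by positivity)] at ht_hi
  have ht : 0 < t := by nlinarith
  exact ⟨t, ht, by linarith [ht_hi.2], by linarith, by linarith [ht_hi.1]⟩

lemma volume_rect_inter_Q_diff_pos {θ L : ℝ} (hL : 1 < L) (h : cos θ ≠ sin θ) :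
    0 < volume ((rect (0, 0) θ L ∩ Q) \ (rect (0, 0) θ 1 ∩ Q)) := by
  set c := cos θ
  set s := sin θ
  obtain ⟨w, hw₁, hw₂, hw⟩ := exists_neg_neg_abs_lt (cos_sq_add_sin_sq θ) h
  obtain ⟨t, ht, htu, htv, htv'⟩ := exists_mul_lt_half_lt_mul (abs_nonneg _) hw hL
  let U : Set (ℝ × ℝ) := {p | |c * p.1 + s * p.2| < 1 / 2 ∧ 1 / 2 < |-s * p.1 + c * p.2| ∧
    |-s * p.1 + c * p.2| < L / 2 ∧ p.1 < 0 ∧ p.2 < 0}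
  have hU_open : IsOpen U := by
    have hu : Continuous fun p : ℝ × ℝ => |c * p.1 + s * p.2| := by fun_prop
    have hv : Continuous fun p : ℝ × ℝ => |-s * p.1 + c * p.2| := by fun_prop
    exact (isOpen_lt hu continuous_const).inter ((isOpen_lt continuous_const hv).inter
      ((isOpen_lt hv continuous_const).inter ((isOpen_lt continuous_fst continuous_const).inter
        (isOpen_lt continuous_snd continuous_const))))
  have h_scale : ∀ a b : ℝ, |a * (t • w).1 + b * (t • w).2| = t * |a * w.1 + b * w.2| := by
    intro a b
    rw [show a * (t • w).1 + b * (t • w).2 = t * (a * w.1 + b * w.2) by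
      simp only [Prod.smul_fst, Prod.smul_snd, smul_eq_mul]; ring, abs_mul, abs_of_pos ht]
  have htw : t • w ∈ U := by
    refine ⟨?_, ?_, ?_, mul_neg_of_pos_of_neg ht hw₁, mul_neg_of_pos_of_neg ht hw₂⟩ <;>
      rw [h_scale] <;> assumption
  have hU_sub : U ⊆ (rect (0, 0) θ L ∩ Q) \ (rect (0, 0) θ 1 ∩ Q) := by
    rintro p ⟨hu, hv, hv', hx, hy⟩
    refine ⟨⟨mem_rect_zero.mpr ⟨hu.le, hv'.le⟩, hx.le, hy.le⟩, fun ⟨hp, _⟩ => ?_⟩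
    exact (mem_rect_zero.mp hp).2.not_gt hv
  exact (hU_open.measure_pos volume ⟨_, htw⟩).trans_le (measure_mono hU_sub)

/-- Decompose the footprint of a centered `1 × L` rectangle (`L > 1`) over a quarter-plane
corner into the blue part (intersection of the inscribed central unit square with the
quarter-plane) and the red part (the remainder).  The blue part always has area `1/4`,
independent of the orientation `θ`, and the red part has measure zero if and only if the
rectangle is in a symmetric 45-degree position. -/
theorem blue_red_decomposition (L : ℝ) (hL : 1 < L) (θ : ℝ) :
    volume (rect (0, 0) θ 1 ∩ Q) = 1 / 4 ∧
      (volume ((rect (0, 0) θ L ∩ Q) \ (rect (0, 0) θ 1 ∩ Q)) = 0 ↔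
        ∃ k : ℤ, θ = π / 4 + k * π) := by
  refine ⟨volume_rect_one_inter_Q θ, ?_⟩
  rw [← cos_eq_sin_iff]
  constructor
  · intro h_null
    by_contra h
    exact (volume_rect_inter_Q_diff_pos hL h).ne' h_null
  · intro h
    rw [sdiff_eq_empty.mpr (subset_inter (rect_inter_Q_subset_rect_one h L) inter_subset_right),
      measure_empty]
end

section
/- For a 1 × L rectangular laptop (L ≥ 1) and a rectangular table with both sides of length at least √2, every stable placement (center of laptop on the table) has footprint area at least 1/4, and the area equals 1/4 only if the laptop center coincides with a corner of the table. -/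
open Real MeasureTheory

/-!
Since `L ≥ 1`, the laptop contains the unit square `S` with the same centre `p` and orientation.
A quarter turn about `p` maps `S` to itself and cycles the four axis-parallel quadrants at `p`,
so each quadrant contains a quarter of `S`. Reflecting the table in its midlines, we may assume
that `p` lies in the lower-left quarter of the table. Since `S` lies in the disc of radius `√2/2`
about `p` and the table sides are at least `√2`, the part of `S` in the upper-right quadrant at
`p` lies on the table. The disc of radius `1/2` about `p` lies in `S`; when `p` is off the left
(bottom) edge, a thin box of it to the left of (below) that quadrant adds positive area, so
equality forces `p` to be a corner.
-/

open Set

def rotQuarter (q : ℝ × ℝ) : ℝ × ℝ := (-q.2, q.1)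

lemma rotQuarter_eq : rotQuarter = Prod.map Neg.neg id ∘ Prod.swap := rfl

lemma measurePreserving_rotQuarter : MeasurePreserving rotQuarter volume volume := by
  rw [rotQuarter_eq, Measure.volume_eq_prod]
  exact ((Measure.measurePreserving_neg volume).prod (MeasurePreserving.id volume)).comp
    Measure.measurePreserving_swap

lemma measurableEmbedding_rotQuarter : MeasurableEmbedding rotQuarter := by
  rw [rotQuarter_eq]
  exact ((MeasurableEquiv.neg ℝ).measurableEmbedding.prodMap MeasurableEmbedding.id).comp
    MeasurableEquiv.prodComm.measurableEmbedding

lemma MeasureTheory.MeasurePreserving.measure_inter_preimage_of_preimage_eq {α : Type*}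
    [MeasurableSpace α] {μ : Measure α} {f : α → α} (hf : MeasurePreserving f μ μ)
    (hfe : MeasurableEmbedding f) {S : Set α} (hS : f ⁻¹' S = S) (X : Set α) :
    μ (S ∩ f ⁻¹' X) = μ (S ∩ X) := by
  rw [← hf.measure_preimage_emb hfe (S ∩ X), preimage_inter, hS]

lemma volume_le_four_mul_volume_inter_quadrant {S : Set (ℝ × ℝ)} (hS : rotQuarter ⁻¹' S = S) :
    volume S ≤ 4 * volume (S ∩ Ici 0 ×ˢ Ici 0) := by
  set Q : Set (ℝ × ℝ) := Ici 0 ×ˢ Ici 0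
  have hrot := measurePreserving_rotQuarter.measure_inter_preimage_of_preimage_eq
    measurableEmbedding_rotQuarter hS
  set r := rotQuarter
  have hcover : S ⊆ S ∩ Q ∪ S ∩ r ⁻¹' Q ∪ S ∩ r ⁻¹' (r ⁻¹' Q) ∪ S ∩ r ⁻¹' (r ⁻¹' (r ⁻¹' Q)) := by
    intro q hq
    simp only [mem_union, mem_inter_iff, mem_preimage, r, rotQuarter, Q, mem_prod, mem_Ici,
      neg_nonneg, neg_neg, and_iff_right hq]
    rcases le_total 0 q.1 with h₁ | h₁ <;> rcases le_total 0 q.2 with h₂ | h₂ <;> simp [*]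
  calc volume S ≤ volume (S ∩ Q ∪ S ∩ r ⁻¹' Q ∪ S ∩ r ⁻¹' (r ⁻¹' Q) ∪
        S ∩ r ⁻¹' (r ⁻¹' (r ⁻¹' Q))) := measure_mono hcover
    _ ≤ volume (S ∩ Q) + volume (S ∩ r ⁻¹' Q) + volume (S ∩ r ⁻¹' (r ⁻¹' Q)) +
        volume (S ∩ r ⁻¹' (r ⁻¹' (r ⁻¹' Q))) := by
          refine (measure_union_le _ _).trans (add_le_add_left ?_ _)
          refine (measure_union_le _ _).trans (add_le_add_left ?_ _)
          exact measure_union_le _ _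
    _ = 4 * volume (S ∩ Q) := by simp only [hrot]; ring

lemma preimage_add_rect (c : ℝ × ℝ) (θ L : ℝ) : (· + c) ⁻¹' rect c θ L = rect 0 θ L := by
  ext q
  simp [rect]

lemma volume_rect (c : ℝ × ℝ) (θ L : ℝ) : volume (rect c θ L) = ENNReal.ofReal L := by
  rw [← measure_preimage_add_right volume c, preimage_add_rect]
  let f := Matrix.toLin (Module.Basis.finTwoProd ℝ) (Module.Basis.finTwoProd ℝ)
    !![cos θ, sin θ; -sin θ, cos θ]
  have hdet : LinearMap.det f = 1 := by
    rw [LinearMap.det_toLin, Matrix.det_fin_two_of]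
    linear_combination cos_sq_add_sin_sq θ
  have hrect : rect 0 θ L = f ⁻¹' (Icc (-1 / 2) (1 / 2) ×ˢ Icc (-L / 2) (L / 2)) := by
    ext q
    simp [rect, f, Matrix.toLin_finTwoProd_apply, abs_le, neg_div, and_and_and_comm]
  rw [hrect, Measure.addHaar_preimage_linearMap _ (by simp [hdet]), hdet, Measure.volume_eq_prod,
    Measure.prod_prod, Real.volume_Icc, Real.volume_Icc]
  ring_nf
  simp

lemma preimage_rotQuarter_rect (θ : ℝ) : rotQuarter ⁻¹' rect 0 θ 1 = rect 0 θ 1 := by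
  ext q
  simp only [rect, rotQuarter, mem_preimage, mem_ofPred_eq, Prod.fst_zero, Prod.snd_zero, sub_zero]
  rw [show cos θ * -q.2 + sin θ * q.1 = -(-sin θ * q.1 + cos θ * q.2) by ring, abs_neg,
    show -sin θ * -q.2 + cos θ * q.1 = cos θ * q.1 + sin θ * q.2 by ring]
  exact and_comm

lemma quarter_le_volume_rect_inter_quadrant (c : ℝ × ℝ) (θ : ℝ) :
    1 / 4 ≤ volume (rect c θ 1 ∩ Ici c.1 ×ˢ Ici c.2) := by
  have htrans : (· + c) ⁻¹' (rect c θ 1 ∩ Ici c.1 ×ˢ Ici c.2) = rect 0 θ 1 ∩ Ici 0 ×ˢ Ici 0 := by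
    rw [preimage_inter, preimage_add_rect]
    congr 1
    ext q
    simp only [mem_preimage, mem_prod, mem_Ici, Prod.fst_add, Prod.snd_add, le_add_iff_nonneg_left]
  rw [← measure_preimage_add_right volume c, htrans]
  refine ENNReal.div_le_of_le_mul ?_
  calc 1 = volume (rect 0 θ 1) := by rw [volume_rect, ENNReal.ofReal_one]
    _ ≤ 4 * volume (rect 0 θ 1 ∩ Ici 0 ×ˢ Ici 0) :=
      volume_le_four_mul_volume_inter_quadrant (preimage_rotQuarter_rect θ)
    _ = _ := mul_comm _ _

lemma rect_subset_rect (c : ℝ × ℝ) (θ : ℝ) {L L' : ℝ} (h : L ≤ L') : rect c θ L ⊆ rect c θ L' :=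
  fun _ hq ↦ ⟨hq.1, hq.2.trans (by linarith)⟩

lemma sq_add_sq_eq_rotate (θ u v : ℝ) :
    u ^ 2 + v ^ 2 = (cos θ * u + sin θ * v) ^ 2 + (-sin θ * u + cos θ * v) ^ 2 := by
  linear_combination (-(u ^ 2 + v ^ 2)) * sin_sq_add_cos_sq θ

lemma sq_add_sq_le_of_mem_rect {c q : ℝ × ℝ} {θ L : ℝ} (hq : q ∈ rect c θ L) :
    (q.1 - c.1) ^ 2 + (q.2 - c.2) ^ 2 ≤ (1 + L ^ 2) / 4 := by
  obtain ⟨h₁, h₂⟩ := hq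
  rw [sq_add_sq_eq_rotate θ]
  have := sq_le_sq' (abs_le.1 h₁).1 (abs_le.1 h₁).2
  have := sq_le_sq' (abs_le.1 h₂).1 (abs_le.1 h₂).2
  linarith

lemma mem_rect_of_sq_add_sq_le {c q : ℝ × ℝ} {θ L : ℝ} (hL : 1 ≤ L)
    (hq : (q.1 - c.1) ^ 2 + (q.2 - c.2) ^ 2 ≤ 1 / 4) : q ∈ rect c θ L := by
  rw [sq_add_sq_eq_rotate θ] at hq
  refine ⟨abs_le_of_sq_le_sq (by nlinarith) (by norm_num), ?_⟩
  exact (abs_le_of_sq_le_sq (b := 1 / 2) (by nlinarith) (by norm_num)).trans (by linarith)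

lemma volume_Ico_prod_Ico (x₁ x₂ y₁ y₂ : ℝ) :
    volume (Ico x₁ x₂ ×ˢ Ico y₁ y₂) = ENNReal.ofReal (x₂ - x₁) * ENNReal.ofReal (y₂ - y₁) := by
  rw [Measure.volume_eq_prod, Measure.prod_prod, Real.volume_Ico, Real.volume_Ico]

lemma rect_inter_quadrant_subset_table {a b θ : ℝ} {p : ℝ × ℝ} (hp₁ : 0 ≤ p.1) (hp₂ : 0 ≤ p.2)
    (ha : p.1 + √2 / 2 ≤ a) (hb : p.2 + √2 / 2 ≤ b) :
    rect p θ 1 ∩ Ici p.1 ×ˢ Ici p.2 ⊆ Icc 0 a ×ˢ Icc 0 b := by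
  rintro q ⟨hq, hq₁, hq₂⟩
  have hdist := sq_add_sq_le_of_mem_rect hq
  have hsqrt : (√2 / 2) ^ 2 = 1 / 2 := by
    rw [div_pow, sq_sqrt zero_le_two]
    norm_num
  simp only [mem_Ici] at hq₁ hq₂
  refine ⟨⟨?_, ?_⟩, ?_, ?_⟩ <;> nlinarith [sqrt_nonneg 2]

lemma quarter_add_le_volume_rect_inter_table {a b L θ : ℝ} {p : ℝ × ℝ} (hL : 1 ≤ L)
    (hp₁ : 0 ≤ p.1) (hp₂ : 0 ≤ p.2) (ha : p.1 + √2 / 2 ≤ a) (hb : p.2 + √2 / 2 ≤ b) :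
    1 / 4 + ENNReal.ofReal (min p.1 (1 / 4) / 4) + ENNReal.ofReal (min p.2 (1 / 4) / 4) ≤
      volume (rect p θ L ∩ Icc 0 a ×ˢ Icc 0 b) := by
  set δ₁ := min p.1 (1 / 4)
  set δ₂ := min p.2 (1 / 4)
  have hδ₁ : 0 ≤ δ₁ ∧ δ₁ ≤ p.1 ∧ δ₁ ≤ 1 / 4 :=
    ⟨le_min hp₁ (by norm_num), min_le_left _ _, min_le_right _ _⟩
  have hδ₂ : 0 ≤ δ₂ ∧ δ₂ ≤ p.2 ∧ δ₂ ≤ 1 / 4 :=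
    ⟨le_min hp₂ (by norm_num), min_le_left _ _, min_le_right _ _⟩
  have hsqrt : 1 / 2 ≤ √2 / 2 := by linarith [one_lt_sqrt_two]
  set A := rect p θ 1 ∩ Ici p.1 ×ˢ Ici p.2
  set Bx := Ico (p.1 - δ₁) p.1 ×ˢ Ico p.2 (p.2 + 1 / 4)
  set By := Ico p.1 (p.1 + 1 / 4) ×ˢ Ico (p.2 - δ₂) p.2
  have hA : A ⊆ rect p θ L ∩ Icc 0 a ×ˢ Icc 0 b := fun q hq ↦
    ⟨rect_subset_rect p θ hL hq.1, rect_inter_quadrant_subset_table hp₁ hp₂ ha hb hq⟩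
  have hB : Bx ∪ By ⊆ rect p θ L ∩ Icc 0 a ×ˢ Icc 0 b := by
    rintro q (⟨⟨hq₁, hq₁'⟩, hq₂, hq₂'⟩ | ⟨⟨hq₁, hq₁'⟩, hq₂, hq₂'⟩) <;>
      refine ⟨mem_rect_of_sq_add_sq_le hL (by nlinarith), ⟨?_, ?_⟩, ?_, ?_⟩ <;> linarith
  have hABx : Disjoint A Bx := disjoint_left.2 fun q ⟨_, hq, _⟩ ⟨hq', _⟩ ↦ by
    simp only [mem_Ici, mem_Ico] at hq hq'
    linarith
  have hABxBy : Disjoint (A ∪ Bx) By := by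
    refine disjoint_union_left.2 ⟨disjoint_left.2 ?_, disjoint_left.2 ?_⟩ <;>
      rintro q ⟨-, hq⟩ ⟨-, hq'⟩ <;> simp only [mem_Ici, mem_Ico, mem_prod] at hq hq' <;> linarith
  have hBx : volume Bx = ENNReal.ofReal (δ₁ / 4) := by
    rw [volume_Ico_prod_Ico, ← ENNReal.ofReal_mul (by linarith)]
    ring_nf
  have hBy : volume By = ENNReal.ofReal (δ₂ / 4) := by
    rw [volume_Ico_prod_Ico, ← ENNReal.ofReal_mul (by norm_num)]
    ring_nf
  calc 1 / 4 + ENNReal.ofReal (δ₁ / 4) + ENNReal.ofReal (δ₂ / 4)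
      ≤ volume A + volume Bx + volume By := by
        rw [hBx, hBy]
        gcongr
        exact quarter_le_volume_rect_inter_quadrant p θ
    _ = volume (A ∪ Bx ∪ By) := by
        rw [measure_union hABxBy (measurableSet_Ico.prod measurableSet_Ico),
          measure_union hABx (measurableSet_Ico.prod measurableSet_Ico)]
    _ ≤ volume (rect p θ L ∩ Icc 0 a ×ˢ Icc 0 b) :=
        measure_mono (union_subset (union_subset hA (subset_union_left.trans hB))
          (subset_union_right.trans hB))

lemma preimage_reflect_fst_rect (a : ℝ) (p : ℝ × ℝ) (θ L : ℝ) :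
    (fun q : ℝ × ℝ ↦ (a - q.1, q.2)) ⁻¹' rect p θ L = rect (a - p.1, p.2) (-θ) L := by
  ext q
  simp only [rect, mem_preimage, mem_ofPred_eq, cos_neg, sin_neg, neg_neg]
  rw [show cos θ * (q.1 - (a - p.1)) + -sin θ * (q.2 - p.2) =
      -(cos θ * (a - q.1 - p.1) + sin θ * (q.2 - p.2)) by ring, abs_neg,
    show sin θ * (q.1 - (a - p.1)) + cos θ * (q.2 - p.2) =
      -sin θ * (a - q.1 - p.1) + cos θ * (q.2 - p.2) by ring]

lemma preimage_reflect_snd_rect (b : ℝ) (p : ℝ × ℝ) (θ L : ℝ) :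
    (fun q : ℝ × ℝ ↦ (q.1, b - q.2)) ⁻¹' rect p θ L = rect (p.1, b - p.2) (-θ) L := by
  ext q
  simp only [rect, mem_preimage, mem_ofPred_eq, cos_neg, sin_neg, neg_neg]
  rw [show cos θ * (q.1 - p.1) + -sin θ * (q.2 - (b - p.2)) =
      cos θ * (q.1 - p.1) + sin θ * (b - q.2 - p.2) by ring,
    show sin θ * (q.1 - p.1) + cos θ * (q.2 - (b - p.2)) =
      -(-sin θ * (q.1 - p.1) + cos θ * (b - q.2 - p.2)) by ring, abs_neg]

lemma volume_rect_reflect_fst_inter_table (a b L θ : ℝ) (p : ℝ × ℝ) :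
    volume (rect (a - p.1, p.2) (-θ) L ∩ Icc 0 a ×ˢ Icc 0 b) =
      volume (rect p θ L ∩ Icc 0 a ×ˢ Icc 0 b) := by
  let σ : ℝ × ℝ → ℝ × ℝ := fun q ↦ (a - q.1, q.2)
  have hσ : MeasurePreserving σ volume volume := by
    rw [Measure.volume_eq_prod]
    exact (Measure.measurePreserving_sub_left volume a).prod (MeasurePreserving.id volume)
  have hσe : MeasurableEmbedding σ :=
    (MeasurableEquiv.ofInvolutive σ (fun q ↦ by simp [σ]) (by fun_prop)).measurableEmbedding
  have htable : σ ⁻¹' (Icc 0 a ×ˢ Icc 0 b) = Icc 0 a ×ˢ Icc 0 b := by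
    ext q
    simp only [σ, mem_preimage, mem_prod, mem_Icc, sub_nonneg, sub_le_self_iff]
    tauto
  rw [← hσ.measure_preimage_emb hσe (rect p θ L ∩ _), preimage_inter, htable,
    preimage_reflect_fst_rect]

lemma volume_rect_reflect_snd_inter_table (a b L θ : ℝ) (p : ℝ × ℝ) :
    volume (rect (p.1, b - p.2) (-θ) L ∩ Icc 0 a ×ˢ Icc 0 b) =
      volume (rect p θ L ∩ Icc 0 a ×ˢ Icc 0 b) := by
  let σ : ℝ × ℝ → ℝ × ℝ := fun q ↦ (q.1, b - q.2)
  have hσ : MeasurePreserving σ volume volume := by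
    rw [Measure.volume_eq_prod]
    exact (MeasurePreserving.id volume).prod (Measure.measurePreserving_sub_left volume b)
  have hσe : MeasurableEmbedding σ :=
    (MeasurableEquiv.ofInvolutive σ (fun q ↦ by simp [σ]) (by fun_prop)).measurableEmbedding
  have htable : σ ⁻¹' (Icc 0 a ×ˢ Icc 0 b) = Icc 0 a ×ˢ Icc 0 b := by
    ext q
    simp only [σ, mem_preimage, mem_prod, mem_Icc, sub_nonneg, sub_le_self_iff]
    tauto
  rw [← hσ.measure_preimage_emb hσe (rect p θ L ∩ _), preimage_inter, htable,
    preimage_reflect_snd_rect]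

lemma exists_volume_rect_inter_table_eq (a b L θ : ℝ) (p : ℝ × ℝ) :
    ∃ θ', volume (rect (min p.1 (a - p.1), min p.2 (b - p.2)) θ' L ∩ Icc 0 a ×ˢ Icc 0 b) =
      volume (rect p θ L ∩ Icc 0 a ×ˢ Icc 0 b) := by
  obtain ⟨θ₁, h₁⟩ : ∃ θ₁, volume (rect (min p.1 (a - p.1), p.2) θ₁ L ∩ Icc 0 a ×ˢ Icc 0 b) =
      volume (rect p θ L ∩ Icc 0 a ×ˢ Icc 0 b) := by
    rcases le_total p.1 (a - p.1) with h | h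
    · exact ⟨θ, by rw [min_eq_left h]⟩
    · exact ⟨-θ, by rw [min_eq_right h, volume_rect_reflect_fst_inter_table]⟩
  obtain ⟨θ₂, h₂⟩ : ∃ θ₂, volume (rect (min p.1 (a - p.1), min p.2 (b - p.2)) θ₂ L ∩
      Icc 0 a ×ˢ Icc 0 b) = volume (rect (min p.1 (a - p.1), p.2) θ₁ L ∩ Icc 0 a ×ˢ Icc 0 b) := by
    rcases le_total p.2 (b - p.2) with h | h
    · exact ⟨θ₁, by rw [min_eq_left h]⟩
    · exact ⟨-θ₁, by rw [min_eq_right h, volume_rect_reflect_snd_inter_table _ _ _ _ (_, p.2)]⟩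
  exact ⟨θ₂, h₂.trans h₁⟩

lemma eq_or_eq_of_min_min_nonpos {x a : ℝ} (h₀ : 0 ≤ x) (ha : x ≤ a)
    (h : min (min x (a - x)) (1 / 4) ≤ 0) : x = 0 ∨ x = a := by
  by_contra! hx
  have : 0 < min (min x (a - x)) (1 / 4) :=
    lt_min (lt_min (h₀.lt_of_ne' hx.1) (sub_pos.2 (ha.lt_of_ne hx.2))) (by norm_num)
  linarith

/-- For a `1 × L` laptop (`L ≥ 1`) on a table `T = [0,a] × [0,b]` with `a, b ≥ √2`, every
stable placement (center `p ∈ T`) has footprint area at least `1/4`, and equality is only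
possible when `p` is a corner of the table. -/
theorem footprint_at_least_quarter (a b L : ℝ)
    (ha : Real.sqrt 2 ≤ a) (hb : Real.sqrt 2 ≤ b) (hL : 1 ≤ L)
    (p : ℝ × ℝ) (hp : p ∈ Set.Icc (0 : ℝ) a ×ˢ Set.Icc (0 : ℝ) b) (θ : ℝ) :
    volume (rect p θ L ∩ Set.Icc (0 : ℝ) a ×ˢ Set.Icc (0 : ℝ) b) ≥ 1 / 4 ∧
      (volume (rect p θ L ∩ Set.Icc (0 : ℝ) a ×ˢ Set.Icc (0 : ℝ) b) = 1 / 4 →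
        (p.1 = 0 ∨ p.1 = a) ∧ (p.2 = 0 ∨ p.2 = b)) := by
  obtain ⟨⟨hp₁, hp₁a⟩, hp₂, hp₂b⟩ := hp
  obtain ⟨θ', hθ'⟩ := exists_volume_rect_inter_table_eq a b L θ p
  have hbound := hθ' ▸ quarter_add_le_volume_rect_inter_table (θ := θ') hL
    (le_min hp₁ (by linarith)) (le_min hp₂ (by linarith))
    (by linarith [min_le_left p.1 (a - p.1), min_le_right p.1 (a - p.1)])
    (by linarith [min_le_left p.2 (b - p.2), min_le_right p.2 (b - p.2)])
  refine ⟨le_trans (by rw [add_assoc]; exact le_self_add) hbound, fun heq ↦ ?_⟩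
  rw [heq, add_assoc] at hbound
  have hexcess := nonpos_iff_eq_zero.1
    (ENNReal.le_of_add_le_add_left (by norm_num) (hbound.trans_eq (add_zero _).symm))
  rw [add_eq_zero, ENNReal.ofReal_eq_zero, ENNReal.ofReal_eq_zero] at hexcess
  exact ⟨eq_or_eq_of_min_min_nonpos hp₁ hp₁a (by linarith [hexcess.1]),
    eq_or_eq_of_min_min_nonpos hp₂ hp₂b (by linarith [hexcess.2])⟩
end
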